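/- Let f, g : (X, c) → (Y, d) be maps of closure spaces. Then f and g are one-step (J₁, ×)-homotopic if and only if for all A ⊆ X, f(c(A)) ∪ g(c(A)) ⊆ d(f(A)) ∩ d(g(A)). Here a one-step (J₁, ×)-homotopy is a continuous map H : X × J₁ → Y with H(·,0) = f and H(·,1) = g, where J₁ is {0,1} with the indiscrete closure and X × J₁ carries the product closure: (x, i) ∈ (c × e)(A) iff every set U × {0,1} with U a neighborhood of x meets A, which for J₁ indiscrete amounts to (c × e)(A) = c(π_X(A)) × {0,1} for nonempty A. -/

import Mathlib

/-!
Testing continuity of a homotopy `H` on the set `A × {j}`, whose product closure is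
`c A × {0, 1}`, gives `H(·, i)(c A) ⊆ d(H(·, j)(A))` for all `i, j`. Conversely, `π_X(A)` is the
union of the two slices `{x | (x, j) ∈ A}`, so additivity of `c` and monotonicity of `d` reduce
continuity of `H` to these four inclusions.
-/

namespace ClosureSpace

variable {X Y ι : Type*}

theorem monotone_of_map_union {d : Set Y → Set Y} (hd : ∀ A B, d (A ∪ B) = d A ∪ d B) :
    Monotone d := fun A B hAB => by
  rw [← Set.union_eq_self_of_subset_left hAB, hd]
  exact Set.subset_union_left

def prodIndiscrete (c : Set X → Set X) (A : Set (X × ι)) : Set (X × ι) :=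
  {p | p.1 ∈ c (Prod.fst '' A)}

theorem image_closure_subset_of_prodIndiscrete {c : Set X → Set X} {d : Set Y → Set Y}
    {H : X × ι → Y} (hH : ∀ A, H '' prodIndiscrete c A ⊆ d (H '' A)) (i j : ι) (A : Set X) :
    (fun x => H (x, i)) '' c A ⊆ d ((fun x => H (x, j)) '' A) := by
  rintro _ ⟨x, hx, rfl⟩
  have hfst : Prod.fst '' (A ×ˢ {j}) = A := Set.fst_image_prod A (Set.singleton_nonempty j)
  have hslice : H '' (A ×ˢ {j}) = (fun x => H (x, j)) '' A := by
    rw [Set.prod_singleton, Set.image_image]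
  rw [← hslice]
  exact hH _ ⟨(x, i), by simpa [prodIndiscrete, hfst] using hx, rfl⟩

theorem fst_image_eq_union_fin_two (A : Set (X × Fin 2)) :
    Prod.fst '' A = {x | (x, 0) ∈ A} ∪ {x | (x, 1) ∈ A} := by
  ext x
  simp [Fin.exists_fin_two]

theorem image_slice_subset (H : X × ι → Y) (A : Set (X × ι)) (j : ι) :
    (fun x => H (x, j)) '' {x | (x, j) ∈ A} ⊆ H '' A :=
  Set.image_subset_iff.2 fun _ hx => ⟨_, hx, rfl⟩

theorem image_prodIndiscrete_subset_fin_two {c : Set X → Set X} {d : Set Y → Set Y}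
    (hc : ∀ A B, c (A ∪ B) = c A ∪ c B) (hd : Monotone d) {H : X × Fin 2 → Y}
    (hH : ∀ i j A, (fun x => H (x, i)) '' c A ⊆ d ((fun x => H (x, j)) '' A))
    (A : Set (X × Fin 2)) :
    H '' prodIndiscrete c A ⊆ d (H '' A) := by
  rintro _ ⟨⟨x, i⟩, hx, rfl⟩
  rw [prodIndiscrete, Set.mem_ofPred_eq, fst_image_eq_union_fin_two, hc] at hx
  rcases hx with hx | hx
  · exact hd (image_slice_subset H A 0) (hH i 0 _ ⟨x, hx, rfl⟩)
  · exact hd (image_slice_subset H A 1) (hH i 1 _ ⟨x, hx, rfl⟩)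

end ClosureSpace

open ClosureSpace in
theorem one_step_J1_times_homotopy_iff_general {X Y : Type*}
    (c : Set X → Set X) (d : Set Y → Set Y)
    (hc3 : ∀ A B : Set X, c (A ∪ B) = c A ∪ c B)
    (hd3 : ∀ A B : Set Y, d (A ∪ B) = d A ∪ d B)
    (f g : X → Y) :
    (∃ H : X × Fin 2 → Y,
      (∀ x : X, H (x, 0) = f x) ∧ (∀ x : X, H (x, 1) = g x) ∧
      (∀ A : Set (X × Fin 2),
        H '' {p : X × Fin 2 | p.1 ∈ c (Prod.fst '' A)} ⊆ d (H '' A))) ↔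
    (∀ A : Set X, f '' c A ∪ g '' c A ⊆ d (f '' A) ∩ d (g '' A)) := by
  constructor
  · rintro ⟨H, hH0, hH1, hH⟩ A
    obtain rfl : (fun x => H (x, 0)) = f := funext hH0
    obtain rfl : (fun x => H (x, 1)) = g := funext hH1
    have key := image_closure_subset_of_prodIndiscrete hH
    exact Set.union_subset (Set.subset_inter (key 0 0 A) (key 0 1 A))
      (Set.subset_inter (key 1 0 A) (key 1 1 A))
  · intro h
    refine ⟨fun p => ![f, g] p.2 p.1, fun _ => rfl, fun _ => rfl,
      image_prodIndiscrete_subset_fin_two hc3 (monotone_of_map_union hd3) ?_⟩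
    intro i j A
    obtain ⟨hfA, hgA⟩ := Set.union_subset_iff.1 (h A)
    fin_cases i <;> fin_cases j
    exacts [hfA.trans Set.inter_subset_left, hfA.trans Set.inter_subset_right,
      hgA.trans Set.inter_subset_left, hgA.trans Set.inter_subset_right]

/-- Characterization of one-step (J₁,×)-homotopy: continuous maps f, g are
one-step (J₁,×)-homotopic iff for all A, f(c(A)) ∪ g(c(A)) ⊆ d(f(A)) ∩ d(g(A)).
Here J₁ = {0,1} with the indiscrete closure, and the product closure on X × J₁
is (c × e)(A) = {p | p.1 ∈ c(π_X(A))}. -/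
theorem one_step_J1_times_homotopy_iff {X Y : Type*}
    (c : Set X → Set X) (d : Set Y → Set Y)
    (hc1 : c ∅ = ∅) (hc2 : ∀ A : Set X, A ⊆ c A)
    (hc3 : ∀ A B : Set X, c (A ∪ B) = c A ∪ c B)
    (hd1 : d ∅ = ∅) (hd2 : ∀ A : Set Y, A ⊆ d A)
    (hd3 : ∀ A B : Set Y, d (A ∪ B) = d A ∪ d B)
    (f g : X → Y)
    (hf : ∀ A : Set X, f '' c A ⊆ d (f '' A))
    (hg : ∀ A : Set X, g '' c A ⊆ d (g '' A)) :
    (∃ H : X × Fin 2 → Y,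
      (∀ x : X, H (x, 0) = f x) ∧ (∀ x : X, H (x, 1) = g x) ∧
      (∀ A : Set (X × Fin 2),
        H '' {p : X × Fin 2 | p.1 ∈ c (Prod.fst '' A)} ⊆ d (H '' A))) ↔
    (∀ A : Set X, f '' c A ∪ g '' c A ⊆ d (f '' A) ∩ d (g '' A)) :=
  one_step_J1_times_homotopy_iff_general c d hc3 hd3 f g
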